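/- Let B be the signed incidence matrix of a directed multigraph G, let P be the Moore–Penrose pseudoinverse of Bᵀ, and let M be the Moore–Penrose pseudoinverse of the graph Laplacian L = B Bᵀ. Let γ be the product over E of standard real Gaussian measures on ℝ^E. Then the vertex coordinates x = P y of a Gaussian random embedding have covariance matrix L⁺: for all vertices i, j ∈ V, ∫ (P y)_i (P y)_j dγ(y) = M_{ij}. -/

import Mathlib

/-!
Write `x = P y`. The coordinates of `y` are independent, centred and of unit variance, so the
second-moment matrix of `y` is the identity and that of `x` is `P Pᵀ`. If `P = (Bᵀ)⁺`, then `P Pᵀ`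
satisfies the four Moore–Penrose conditions for `B Bᵀ = L`, hence equals `L⁺` by uniqueness of the
pseudoinverse.
-/

open Matrix

/-- The signed incidence matrix of the directed multigraph on vertex set `V` with
edge set `E` given by maps `head tail : E → V`. -/
noncomputable def incidenceMatrix {V E : Type*} [DecidableEq V]
    (head tail : E → V) : Matrix V E ℝ := fun i e =>
  if head e = tail e then 0
  else if i = head e then 1
  else if i = tail e then -1
  else 0

/-- The simple graph underlying the directed multigraph given by `head, tail`:
`u` is adjacent to `v` iff `u ≠ v` and some edge `e` has `{head e, tail e} = {u, v}`. -/
def underlyingGraph {V E : Type*} (head tail : E → V) : SimpleGraph V where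
  Adj u v := u ≠ v ∧ ∃ e, (head e = u ∧ tail e = v) ∨ (head e = v ∧ tail e = u)
  symm := by
    constructor
    rintro u v ⟨huv, e, he⟩
    exact ⟨huv.symm, e, he.symm⟩
  loopless := by
    constructor
    rintro v ⟨hv, -⟩
    exact hv rfl

/-- `P` is the Moore–Penrose pseudoinverse of `A` if the four Moore–Penrose
conditions hold. -/
def IsMoorePenroseInverse {m n : Type*} [Fintype m] [Fintype n]
    (A : Matrix m n ℝ) (P : Matrix n m ℝ) : Prop :=
  A * P * A = A ∧ P * A * P = P ∧ (A * P)ᵀ = A * P ∧ (P * A)ᵀ = P * A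

open MeasureTheory ProbabilityTheory

namespace IsMoorePenroseInverse

variable {m n : Type*} [Fintype m] [Fintype n] {A : Matrix m n ℝ} {P Q : Matrix n m ℝ}

theorem unique (hP : IsMoorePenroseInverse A P) (hQ : IsMoorePenroseInverse A Q) : P = Q := by
  obtain ⟨hP₁, hP₂, hP₃, hP₄⟩ := hP
  obtain ⟨hQ₁, hQ₂, hQ₃, hQ₄⟩ := hQ
  have hAP : A * P = A * Q :=
    calc A * P = (A * Q * (A * P))ᵀ := by rw [← Matrix.mul_assoc, hQ₁, hP₃]
      _ = (A * P)ᵀ * (A * Q)ᵀ := transpose_mul _ _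
      _ = A * Q := by rw [hP₃, hQ₃, ← Matrix.mul_assoc, hP₁]
  have hPA : P * A = Q * A :=
    calc P * A = (P * A * (Q * A))ᵀ := by rw [Matrix.mul_assoc, ← Matrix.mul_assoc A, hQ₁, hP₄]
      _ = (Q * A)ᵀ * (P * A)ᵀ := transpose_mul _ _
      _ = Q * A := by rw [hQ₄, hP₄, Matrix.mul_assoc, ← Matrix.mul_assoc A, hP₁]
  calc P = P * A * P := hP₂.symm
    _ = Q * A * Q := by rw [hPA, Matrix.mul_assoc, hAP, ← Matrix.mul_assoc]
    _ = Q := hQ₂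

theorem transpose_mul_self (hP : IsMoorePenroseInverse A P) :
    IsMoorePenroseInverse (Aᵀ * A) (P * Pᵀ) := by
  obtain ⟨h₁, h₂, h₃, h₄⟩ := hP
  have hPt : Pᵀ * Aᵀ = A * P := by rw [← transpose_mul, h₃]
  have hAt : Aᵀ * Pᵀ = P * A := by rw [← transpose_mul, h₄]
  have hAPPt : A * P * Pᵀ = Pᵀ := by rw [← h₃, ← transpose_mul, ← Matrix.mul_assoc, h₂]
  have hL : Aᵀ * A * (P * Pᵀ) = P * A := by
    rw [Matrix.mul_assoc, ← Matrix.mul_assoc A, hAPPt, hAt]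
  have hR : P * Pᵀ * (Aᵀ * A) = P * A := by
    rw [← Matrix.mul_assoc, Matrix.mul_assoc P, hPt, ← Matrix.mul_assoc, h₂]
  refine ⟨?_, ?_, by rw [hL, h₄], by rw [hR, h₄]⟩
  · rw [hL, ← hAt, Matrix.mul_assoc, ← Matrix.mul_assoc Pᵀ, hPt, h₁]
  · rw [hR, Matrix.mul_assoc, ← Matrix.mul_assoc A, hAPPt]

end IsMoorePenroseInverse

theorem integral_sq_gaussianReal (μ : ℝ) (v : NNReal) :
    ∫ x, x ^ 2 ∂gaussianReal μ v = v + μ ^ 2 := by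
  have h := variance_eq_sub (memLp_id_gaussianReal (μ := μ) (v := v) 2)
  rw [variance_id_gaussianReal] at h
  simp only [Pi.pow_apply, id_eq, integral_id_gaussianReal] at h
  linarith

section SecondMoment

variable {ι : Type*} [Fintype ι]

noncomputable def secondMomentMatrix (ν : Measure (ι → ℝ)) : Matrix ι ι ℝ :=
  Matrix.of fun e f => ∫ y, y e * y f ∂ν

theorem integral_mulVec_mul_mulVec {m n : Type*} {ν : Measure (ι → ℝ)}
    (hν : ∀ e, MemLp (fun y => y e) 2 ν) (P : Matrix m ι ℝ) (Q : Matrix n ι ℝ) (i : m) (j : n) :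
    ∫ y, (P *ᵥ y) i * (Q *ᵥ y) j ∂ν = (P * secondMomentMatrix ν * Qᵀ) i j := by
  have hint (e f : ι) : Integrable (fun y => P i e * Q j f * (y e * y f)) ν :=
    ((hν e).integrable_mul (hν f)).const_mul _
  calc ∫ y, (P *ᵥ y) i * (Q *ᵥ y) j ∂ν
      = ∫ y, ∑ e, ∑ f, P i e * Q j f * (y e * y f) ∂ν := by
        simp only [mulVec, dotProduct, Finset.sum_mul_sum, mul_mul_mul_comm]
    _ = ∑ e, ∑ f, P i e * Q j f * ∫ y, y e * y f ∂ν := by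
        rw [integral_finsetSum _ fun e _ => integrable_finsetSum _ fun f _ => hint e f]
        simp_rw [integral_finsetSum _ fun f _ => hint _ f, integral_const_mul]
    _ = (P * secondMomentMatrix ν * Qᵀ) i j := by
        simp only [mul_apply, transpose_apply, secondMomentMatrix, of_apply, Finset.sum_mul]
        rw [Finset.sum_comm]
        exact Finset.sum_congr rfl fun _ _ => Finset.sum_congr rfl fun _ _ => mul_right_comm _ _ _

theorem secondMomentMatrix_pi [DecidableEq ι] {μ : ι → Measure ℝ}
    [∀ i, IsProbabilityMeasure (μ i)] (hμ : ∀ i, ∫ x, x ∂μ i = 0) :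
    secondMomentMatrix (Measure.pi μ) = diagonal fun i => ∫ x, x ^ 2 ∂μ i := by
  ext e f
  rcases eq_or_ne e f with rfl | hef
  · simp only [secondMomentMatrix, of_apply, diagonal_apply_eq, ← sq]
    exact integral_comp_eval (X := fun _ => ℝ) (f := fun x : ℝ => x ^ 2) (by fun_prop)
  · have hindep : IndepFun (fun y : ι → ℝ => y e) (fun y => y f) (Measure.pi μ) :=
      (iIndepFun_pi (X := fun _ => id) fun i => aemeasurable_id (μ := μ i)).indepFun hef
    rw [secondMomentMatrix, of_apply, diagonal_apply_ne _ hef,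
      hindep.integral_fun_mul_eq_mul_integral (measurable_pi_apply e).aestronglyMeasurable
        (measurable_pi_apply f).aestronglyMeasurable]
    simp [integral_eval, hμ]

theorem secondMomentMatrix_pi_gaussianReal [DecidableEq ι] :
    secondMomentMatrix (Measure.pi fun _ : ι => gaussianReal 0 1) = 1 := by
  rw [secondMomentMatrix_pi fun _ => integral_id_gaussianReal, ← diagonal_one]
  simp [integral_sq_gaussianReal]

end SecondMoment

theorem vertex_covariance_general
    {V E : Type*} [Fintype V] [Fintype E]
    (B : Matrix V E ℝ)
    (P : Matrix V E ℝ) (hP : IsMoorePenroseInverse Bᵀ P)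
    (M : Matrix V V ℝ) (hM : IsMoorePenroseInverse (B * Bᵀ) M)
    (γ : Measure (E → ℝ)) (hγ : γ = Measure.pi fun _ : E => gaussianReal 0 1) :
    ∀ i j : V,
      ∫ y : E → ℝ, (P.mulVec y i) * (P.mulVec y j) ∂γ = M i j := by
  classical
  intro i j
  have hMP : M = P * Pᵀ := hM.unique (by simpa using hP.transpose_mul_self)
  have hcoord (e : E) : MemLp (fun y => y e) 2 (Measure.pi fun _ : E => gaussianReal 0 1) :=
    (memLp_id_gaussianReal 2).comp_measurePreserving (measurePreserving_eval _ e)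
  rw [hγ, integral_mulVec_mul_mulVec hcoord, secondMomentMatrix_pi_gaussianReal, Matrix.mul_one, hMP]

/-- The vertex coordinates `x = P y` of a Gaussian random embedding, with `y` sampled
from the standard Gaussian product measure `γ` on `ℝ^E`, have covariance matrix the
Moore–Penrose pseudoinverse `M = L⁺` of the graph Laplacian `L = B Bᵀ`. -/
theorem vertex_covariance
    {V E : Type*} [Fintype V] [Fintype E] [DecidableEq V]
    (head tail : E → V)
    (B : Matrix V E ℝ) (hB : B = incidenceMatrix head tail)
    (P : Matrix V E ℝ) (hP : IsMoorePenroseInverse Bᵀ P)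
    (M : Matrix V V ℝ) (hM : IsMoorePenroseInverse (B * Bᵀ) M)
    (γ : Measure (E → ℝ)) (hγ : γ = Measure.pi fun _ : E => gaussianReal 0 1) :
    ∀ i j : V,
      ∫ y : E → ℝ, (P.mulVec y i) * (P.mulVec y j) ∂γ = M i j :=
  vertex_covariance_general B P hP M hM γ hγ
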